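/- Assume A(p) > 0 for all p ∈ ℝ. Then for every transformation datum, every p ∈ ℝ, and every v ∈ V: (Ā(f p))^(2/(n−2)) • (exp(2·γ₁ p) • v) = (A p)^(2/(n−2)) • v (real powers). That is, the invariant metric ĝ := A^(2/(n−2))·g, formed pointwise from the non-minimal coupling A and the metric, is unchanged under the conformal–almost-geodesic frame transformations. -/

import Mathlib

/-- Transformation rule (t1) for the non-minimal coupling coefficient `A`:
`Ā(f x) = exp(−(n−2)·γ₁ x)·A x`. -/
noncomputable def transA (n : ℕ) (f : ℝ ≃ ℝ) (γ₁ A : ℝ → ℝ) : ℝ → ℝ :=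
  fun y => Real.exp (-((n : ℝ) - 2) * γ₁ (f.symm y)) * A (f.symm y)

open Real

theorem transA_apply_apply (n : ℕ) (f : ℝ ≃ ℝ) (γ₁ A : ℝ → ℝ) (x : ℝ) :
    transA n f γ₁ A (f x) = exp (-((n : ℝ) - 2) * γ₁ x) * A x := by
  simp only [transA, Equiv.symm_apply_apply]

theorem rpow_exp_mul_smul_exp_smul {V : Type*} [AddCommGroup V] [Module ℝ V]
    {c : ℝ} (hc : c ≠ 0) {a : ℝ} (ha : 0 ≤ a) (k t : ℝ) (v : V) :
    (exp (-c * t) * a) ^ (k / c) • (exp (k * t) • v) = a ^ (k / c) • v := by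
  have hexp : exp (-c * t) ^ (k / c) * exp (k * t) = 1 := by
    rw [← exp_mul, ← exp_add]
    field_simp
    simp
  rw [smul_smul, mul_rpow (exp_pos _).le ha, mul_right_comm, hexp, one_mul]

theorem invariant_metric_hat_general (n : ℕ) (hn : 3 ≤ n)
    {V : Type*} [AddCommGroup V] [Module ℝ V]
    (f : ℝ ≃ ℝ) (γ₁ : ℝ → ℝ) (A : ℝ → ℝ) (hA : ∀ x, 0 < A x)
    (p : ℝ) (v : V) :
    (transA n f γ₁ A (f p)) ^ ((2 : ℝ) / ((n : ℝ) - 2)) • (Real.exp (2 * γ₁ p) • v)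
      = (A p) ^ ((2 : ℝ) / ((n : ℝ) - 2)) • v := by
  have hn2 : (n : ℝ) - 2 ≠ 0 := by
    have : (3 : ℝ) ≤ n := by exact_mod_cast hn
    linarith
  rw [transA_apply_apply]
  exact rpow_exp_mul_smul_exp_smul hn2 (hA p).le 2 (γ₁ p) v

/-- The invariant metric `ĝ := A^(2/(n−2))·g` is unchanged under the
conformal–almost-geodesic frame transformations: for `A > 0`, and `v ∈ V` the
value of the metric at a fixed spacetime point (transforming as
`v ↦ exp(2·γ₁ p)•v` while the scalar field value transforms as `p ↦ f p`),
one has `(Ā(f p))^(2/(n−2)) • (exp(2·γ₁ p)•v) = (A p)^(2/(n−2)) • v`. -/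
theorem invariant_metric_hat (n : ℕ) (hn : 3 ≤ n)
    {V : Type*} [AddCommGroup V] [Module ℝ V]
    (f : ℝ ≃ ℝ) (γ₁ γ₂ γ₃ : ℝ → ℝ) (A : ℝ → ℝ) (hA : ∀ x, 0 < A x)
    (p : ℝ) (v : V) :
    (transA n f γ₁ A (f p)) ^ ((2 : ℝ) / ((n : ℝ) - 2)) • (Real.exp (2 * γ₁ p) • v)
      = (A p) ^ ((2 : ℝ) / ((n : ℝ) - 2)) • v :=
  invariant_metric_hat_general n hn f γ₁ A hA p v
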